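/- Let G be a group and μ ∈ G an element that normally generates G. Then the quotient G / ⟨⟨[g,μ] : g ∈ G⟩⟩ (quotient by the normal closure of all commutators with μ) is isomorphic to the abelianization G/[G,G]. -/

import Mathlib

/-!
Modulo `N = ⟨⟨[g, μ] : g ∈ G⟩⟩` the image of `μ` is central. The centre is normal and the image of
`μ` normally generates `G ⧸ N`, so `G ⧸ N` is abelian, i.e. `[G, G] ≤ N`. The reverse inclusion is
clear, so `N = [G, G]` and both quotients are the same.
-/

open scoped commutatorElement

namespace Subgroup

variable {G : Type*} [Group G]

theorem center_eq_top_of_normalClosure_eq_top {μ : G} (hμ : normalClosure {μ} = ⊤)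
    (hμc : μ ∈ center G) : center G = ⊤ :=
  top_le_iff.1 (hμ ▸ normalClosure_le_normal (Set.singleton_subset_iff.2 hμc))

theorem normalClosure_map_eq_top {H : Type*} [Group H] {f : G →* H}
    (hf : Function.Surjective f) {μ : G} (hμ : normalClosure {μ} = ⊤) :
    normalClosure {f μ} = ⊤ := by
  rw [← Set.image_singleton, ← map_normalClosure _ _ hf, hμ, ← MonoidHom.range_eq_map,
    f.range_eq_top.2 hf]

theorem normalClosure_commutatorElement_right_eq_commutator {μ : G}
    (hμ : normalClosure {μ} = ⊤) :
    normalClosure {c : G | ∃ g : G, c = ⁅g, μ⁆} = _root_.commutator G := by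
  set N := normalClosure {c : G | ∃ g : G, c = ⁅g, μ⁆}
  refine le_antisymm (normalClosure_le_normal ?_) ?_
  · rintro _ ⟨g, rfl⟩
    exact commutator_mem_commutator (mem_top g) (mem_top μ)
  have hμc : QuotientGroup.mk' N μ ∈ center (G ⧸ N) := by
    refine mem_center_iff.2 (QuotientGroup.induction_on · fun g ↦ ?_)
    have hgμ : QuotientGroup.mk' N ⁅g, μ⁆ = 1 :=
      (QuotientGroup.eq_one_iff _).2 (subset_normalClosure ⟨g, rfl⟩)
    rwa [map_commutatorElement, commutatorElement_eq_one_iff_mul_comm] at hgμ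
  have hcenter : center (G ⧸ N) = ⊤ := center_eq_top_of_normalClosure_eq_top
    (normalClosure_map_eq_top (QuotientGroup.mk'_surjective N) hμ) hμc
  rw [_root_.commutator_def, commutator_le]
  intro g _ h _
  rw [← QuotientGroup.eq_one_iff, ← QuotientGroup.mk'_apply, map_commutatorElement,
    commutatorElement_eq_one_iff_mul_comm]
  exact mem_center_iff.1 (hcenter ▸ mem_top _) _ |>.symm

end Subgroup

/-- If `μ` normally generates `G`, then the quotient of `G` by the normal closure of
all commutators `[g, μ]` is isomorphic to the abelianization of `G`. -/
theorem quotient_commutators_iso_abelianization {G : Type*} [Group G] (μ : G)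
    (hμ : Subgroup.normalClosure {μ} = ⊤) :
    Nonempty ((G ⧸ Subgroup.normalClosure {c : G | ∃ g : G, c = ⁅g, μ⁆}) ≃* Abelianization G) :=
  ⟨QuotientGroup.quotientMulEquivOfEq
    (Subgroup.normalClosure_commutatorElement_right_eq_commutator hμ)⟩
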